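/- For $k \geq 2$, the ordered set $P_k$ is not order-isomorphic to the ordered set $O_m$ for any $m \geq 1$, where $P_k = \{t \in [0,1]^{2^{\{1,\dots,k\}}} : \sum_a t_a = 1\}$ with the order given by upwards closed families, and $O_m = \{t \in [0,1]^m : t_1 \leq \dots \leq t_m\}$ with the coordinatewise order. -/
import Mathlib


/-- The underlying set of `P_k`. -/
def PkSet (k : ℕ) : Set (Finset (Fin k) → ℝ) :=
  {t | (∀ a, t a ∈ Set.Icc (0 : ℝ) 1) ∧ (∑ a : Finset (Fin k), t a) = 1}

/-- A family of subsets of `{1,…,k}` is upwards closed. -/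
def UpClosed {k : ℕ} (𝒜 : Finset (Finset (Fin k))) : Prop :=
  ∀ a ∈ 𝒜, ∀ b : Finset (Fin k), a ⊆ b → b ∈ 𝒜

/-- The order on `P_k`. -/
def PkLe {k : ℕ} (t s : ↥(PkSet k)) : Prop :=
  ∀ 𝒜 : Finset (Finset (Fin k)), UpClosed 𝒜 →
    (∑ a ∈ 𝒜, t.1 a) ≤ ∑ a ∈ 𝒜, s.1 a

/-- The ordered set `O_m` of nondecreasing `m`-tuples in `[0,1]`. -/
def Ok (m : ℕ) : Set (Fin m → ℝ) :=
  {t | (∀ i, t i ∈ Set.Icc (0 : ℝ) 1) ∧ Monotone t}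

/-- Dirac mass at `{i}`. -/
def deltaP {k : ℕ} (i : Fin k) : Finset (Fin k) → ℝ := fun a => if a = {i} then 1 else 0

lemma deltaP_mem {k : ℕ} (i : Fin k) : deltaP i ∈ PkSet k := by
  constructor
  · intro a; unfold deltaP; split <;> norm_num
  · simp [deltaP, Finset.sum_ite_eq']

lemma upClosed_filter {k : ℕ} (j : Fin k) :
    UpClosed (Finset.univ.filter (fun b : Finset (Fin k) => j ∈ b)) := by
  intro a ha b hab
  simp only [Finset.mem_filter, Finset.mem_univ, true_and] at *
  exact hab ha

lemma support_of_le_delta {k : ℕ} (i : Fin k) (s : ↥(PkSet k))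
    (hs : PkLe s ⟨deltaP i, deltaP_mem i⟩) :
    ∀ a : Finset (Fin k), a ≠ ∅ → a ≠ {i} → s.1 a = 0 := by
  intro a ha hai
  have hex : ∃ j ∈ a, j ≠ i := by
    by_contra h
    push_neg at h
    have hsub : a ⊆ {i} := fun j hj => Finset.mem_singleton.mpr (h j hj)
    rcases Finset.subset_singleton_iff.mp hsub with h' | h'
    · exact ha h'
    · exact hai h'
  obtain ⟨j, hja, hji⟩ := hex
  have hup := hs _ (upClosed_filter j)
  have hzero : ∑ b ∈ Finset.univ.filter (fun b : Finset (Fin k) => j ∈ b), deltaP i b = 0 := by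
    rw [show (deltaP i : Finset (Fin k) → ℝ) = fun b => if b = {i} then 1 else 0 from rfl]
    rw [Finset.sum_ite_eq']
    simp [hji]
  rw [hzero] at hup
  have hnn : ∀ b ∈ Finset.univ.filter (fun b : Finset (Fin k) => j ∈ b), 0 ≤ s.1 b :=
    fun b _ => (s.2.1 b).1
  have := (Finset.sum_eq_zero_iff_of_nonneg hnn).mp (le_antisymm hup (Finset.sum_nonneg hnn))
  exact this a (by simp [hja])

lemma pkle_of_le_delta {k : ℕ} (i : Fin k) (s s' : ↥(PkSet k))
    (hs : PkLe s ⟨deltaP i, deltaP_mem i⟩) (hs' : PkLe s' ⟨deltaP i, deltaP_mem i⟩)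
    (h : s.1 {i} ≤ s'.1 {i}) : PkLe s s' := by
  intro 𝒜 h𝒜
  by_cases hemp : ∅ ∈ 𝒜
  · have huniv : 𝒜 = Finset.univ :=
      Finset.eq_univ_iff_forall.mpr (fun b => h𝒜 ∅ hemp b (Finset.empty_subset b))
    rw [huniv]
    have h1 : ∑ a ∈ Finset.univ, s.1 a = 1 := s.2.2
    have h2 : ∑ a ∈ Finset.univ, s'.1 a = 1 := s'.2.2
    rw [h1, h2]
  · apply Finset.sum_le_sum
    intro a ha
    by_cases hai : a = {i}
    · subst hai; exact h
    · have hane : a ≠ ∅ := fun h' => hemp (h' ▸ ha)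
      rw [support_of_le_delta i s hs a hane hai]
      exact (s'.2.1 a).1

lemma chain_below_delta {k : ℕ} (i : Fin k) (s s' : ↥(PkSet k))
    (hs : PkLe s ⟨deltaP i, deltaP_mem i⟩) (hs' : PkLe s' ⟨deltaP i, deltaP_mem i⟩) :
    PkLe s s' ∨ PkLe s' s := by
  rcases le_total (s.1 {i}) (s'.1 {i}) with h | h
  · exact Or.inl (pkle_of_le_delta i s s' hs hs' h)
  · exact Or.inr (pkle_of_le_delta i s' s hs' hs h)

lemma delta_not_le {k : ℕ} (i j : Fin k) (hij : i ≠ j) :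
    ¬ PkLe ⟨deltaP i, deltaP_mem i⟩ ⟨deltaP j, deltaP_mem j⟩ := by
  intro h
  have := h (Finset.univ.filter (fun b : Finset (Fin k) => i ∈ b)) (upClosed_filter i)
  have hL : ∑ b ∈ Finset.univ.filter (fun b : Finset (Fin k) => i ∈ b), deltaP i b = 1 := by
    rw [show (deltaP i : Finset (Fin k) → ℝ) = fun b => if b = {i} then 1 else 0 from rfl]
    rw [Finset.sum_ite_eq']
    simp
  have hR : ∑ b ∈ Finset.univ.filter (fun b : Finset (Fin k) => i ∈ b), deltaP j b = 0 := by
    rw [show (deltaP j : Finset (Fin k) → ℝ) = fun b => if b = {j} then 1 else 0 from rfl]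
    rw [Finset.sum_ite_eq']
    simp [hij]
  rw [hL, hR] at this
  linarith

/-- If the downset of `x` in `O_m` is a chain, then `x` vanishes except at the last coord. -/
lemma ok_zero {m : ℕ} (hm : 1 ≤ m) (x : ↥(Ok m))
    (hx : ∀ s s' : ↥(Ok m), s ≤ x → s' ≤ x → s ≤ s' ∨ s' ≤ s) :
    ∀ i : Fin m, (i : ℕ) + 1 < m → x.1 i = 0 := by
  intro i hi
  by_contra h
  have hxi : 0 < x.1 i := lt_of_le_of_ne (x.2.1 i).1 (Ne.symm h)
  set last : Fin m := ⟨m - 1, by omega⟩ with hlast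
  have hile : i ≤ last := by simp [Fin.le_def, hlast]; omega
  have hine : i ≠ last := by
    intro h'
    have : (i : ℕ) = m - 1 := by rw [h']
    omega
  set s1 : Fin m → ℝ := fun j => if i ≤ j then x.1 i / 2 else 0 with hs1
  set s2 : Fin m → ℝ := fun j => if j = last then x.1 last else 0 with hs2
  have hs1mem : s1 ∈ Ok m := by
    constructor
    · intro j
      simp only [hs1]
      split
      · constructor
        · linarith [(x.2.1 i).1]
        · linarith [(x.2.1 i).2]
      · norm_num
    · intro j j' hjj'
      simp only [hs1]
      by_cases hij : i ≤ j
      · rw [if_pos hij, if_pos (le_trans hij hjj')]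
      · rw [if_neg hij]
        split
        · linarith [(x.2.1 i).1]
        · exact le_rfl
  have hs2mem : s2 ∈ Ok m := by
    constructor
    · intro j
      simp only [hs2]
      split
      · exact x.2.1 last
      · norm_num
    · intro j j' hjj'
      simp only [hs2]
      by_cases hj : j = last
      · have hj' : j' = last := by
          subst hj
          refine le_antisymm ?_ hjj'
          simp [Fin.le_def, hlast]; omega
        rw [if_pos hj, if_pos hj']
      · rw [if_neg hj]
        split
        · exact (x.2.1 last).1
        · exact le_rfl
  have hle1 : (⟨s1, hs1mem⟩ : ↥(Ok m)) ≤ x := by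
    intro j
    simp only [hs1]
    by_cases hij : i ≤ j
    · rw [if_pos hij]
      have := x.2.2 hij
      linarith
    · rw [if_neg hij]
      exact (x.2.1 j).1
  have hle2 : (⟨s2, hs2mem⟩ : ↥(Ok m)) ≤ x := by
    intro j
    simp only [hs2]
    by_cases hj : j = last
    · rw [if_pos hj, hj]
    · rw [if_neg hj]
      exact (x.2.1 j).1
  rcases hx ⟨s1, hs1mem⟩ ⟨s2, hs2mem⟩ hle1 hle2 with hc | hc
  · have := hc i
    simp only [hs1, hs2, if_pos (le_refl i), if_neg hine] at this
    linarith
  · have := hc last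
    simp only [hs1, hs2, if_pos hile, if_pos rfl] at this
    have hmono := x.2.2 hile
    linarith

lemma ok_comparable {m : ℕ} (hm : 1 ≤ m) (x y : ↥(Ok m))
    (hx : ∀ s s' : ↥(Ok m), s ≤ x → s' ≤ x → s ≤ s' ∨ s' ≤ s)
    (hy : ∀ s s' : ↥(Ok m), s ≤ y → s' ≤ y → s ≤ s' ∨ s' ≤ s) :
    x ≤ y ∨ y ≤ x := by
  set last : Fin m := ⟨m - 1, by omega⟩ with hlast
  have hxz := ok_zero hm x hx
  have hyz := ok_zero hm y hy
  have key : ∀ u v : ↥(Ok m), (∀ i : Fin m, (i : ℕ) + 1 < m → u.1 i = 0) →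
      u.1 last ≤ v.1 last → u ≤ v := by
    intro u v hu h j
    by_cases hj : j = last
    · rw [hj]; exact h
    · have hjlt : (j : ℕ) + 1 < m := by
        have := j.isLt
        have : (j : ℕ) ≠ m - 1 := fun h' => hj (by simp [hlast, Fin.ext_iff, h'])
        omega
      rw [hu j hjlt]
      exact (v.2.1 j).1
  rcases le_total (x.1 last) (y.1 last) with h | h
  · exact Or.inl (key x y hxz h)
  · exact Or.inr (key y x hyz h)

theorem stmt6 (k m : ℕ) (hk : 2 ≤ k) (hm : 1 ≤ m) :
    ¬ ∃ e : ↥(PkSet k) ≃ ↥(Ok m),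
        ∀ t s : ↥(PkSet k), PkLe t s ↔ e t ≤ e s := by
  rintro ⟨e, he⟩
  set i0 : Fin k := ⟨0, by omega⟩
  set i1 : Fin k := ⟨1, by omega⟩
  have hchain : ∀ i : Fin k, ∀ s s' : ↥(Ok m),
      s ≤ e ⟨deltaP i, deltaP_mem i⟩ → s' ≤ e ⟨deltaP i, deltaP_mem i⟩ →
      s ≤ s' ∨ s' ≤ s := by
    intro i s s' hs hs'
    have h1 : PkLe (e.symm s) ⟨deltaP i, deltaP_mem i⟩ := by
      rw [he]; simpa using hs
    have h2 : PkLe (e.symm s') ⟨deltaP i, deltaP_mem i⟩ := by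
      rw [he]; simpa using hs'
    rcases chain_below_delta i _ _ h1 h2 with h | h
    · left; have := (he _ _).mp h; simpa using this
    · right; have := (he _ _).mp h; simpa using this
  have hne : i0 ≠ i1 := by
    intro h'
    have : (0 : ℕ) = 1 := congrArg Fin.val h'
    omega
  rcases ok_comparable hm (e ⟨deltaP i0, deltaP_mem i0⟩) (e ⟨deltaP i1, deltaP_mem i1⟩)
      (hchain i0) (hchain i1) with h | h
  · exact delta_not_le i0 i1 hne ((he _ _).mpr h)
  · exact delta_not_le i1 i0 hne.symm ((he _ _).mpr h)
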